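/- arXiv:1509.00297 — 3 statements merged into one kernel-verified Lean document; each statement's English description precedes it below -/
import Mathlib

section
/- Let d ≥ 2 be an integer and let h_d(x) = x^{−1} f_d(x). If p, q ∈ ℚ[x] are coprime, q ≠ 0, and ‖h_d − p/q‖ = −2‖q‖ − c for a positive integer c (i.e., p/q is a convergent of h_d with rate of approximation c), then ‖g_d − (x−1)p(x^d)/q(x^d)‖ = −2d‖q‖ − (dc − 1); moreover the polynomials (x−1)p(x^d) and q(x^d) are coprime if and only if (x−1) does not divide q(x). -/
open Polynomial

noncomputable section

/-- The coefficient of `x^{-n}` in the generalized Thue–Morse series `f_d`: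
`(-1)^s` if every base-`d` digit of `n` is `0` or `1` and exactly `s` digits equal `1`,
and `0` otherwise. -/
def tmCoeff (d n : ℕ) : ℚ :=
  if (Nat.digits d n).all (· ≤ 1) then (-1 : ℚ) ^ (Nat.digits d n).sum else 0

/-- We represent the field `ℚ((x⁻¹))` of formal Laurent series in `x⁻¹` as
`LaurentSeries ℚ` in the variable `y = x⁻¹`; the coefficient of `y^n` is the
coefficient of `x^{-n}`.  `fd d` is the generalized Thue–Morse function `f_d`. -/
def fd (d : ℕ) : LaurentSeries ℚ :=
  HahnSeries.ofPowerSeries ℤ ℚ (PowerSeries.mk fun n => tmCoeff d n)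

/-- The element `x` of `ℚ((x⁻¹))`, i.e. `y⁻¹`. -/
def xL : LaurentSeries ℚ := HahnSeries.single (-1 : ℤ) 1

/-- Substitution `x ↦ x^d` on `ℚ((x⁻¹))` (i.e. `y ↦ y^d`). -/
def substPow (d : ℕ) (u : LaurentSeries ℚ) : LaurentSeries ℚ :=
  if h : 0 < d then
    HahnSeries.embDomain
      (OrderEmbedding.ofStrictMono (fun n : ℤ => (d : ℤ) * n)
        (fun a b hab => mul_lt_mul_of_pos_left hab (by exact_mod_cast h))) u
  else 0

/-- The degree `‖u‖` of a Laurent series `u ∈ ℚ((x⁻¹))`: the largest exponent of `x`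
with nonzero coefficient, i.e. minus the order in `y = x⁻¹`. -/
def ldeg (u : LaurentSeries ℚ) : ℤ := -u.order

/-- The embedding of `ℚ[x]` into `ℚ((x⁻¹))`, sending the polynomial variable to `x`. -/
def polyToLS (p : ℚ[X]) : LaurentSeries ℚ := Polynomial.aeval xL p

/-- `u ∈ ℚ((x⁻¹))` is well approximable if for every integer `C` there are polynomials
`p, q`, `q ≠ 0`, with `‖u - p/q‖ < -2‖q‖ - C`. -/
def wellApprox (u : LaurentSeries ℚ) : Prop :=
  ∀ C : ℤ, ∃ p q : ℚ[X], q ≠ 0 ∧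
    ldeg (u - polyToLS p / polyToLS q) < -2 * (q.natDegree : ℤ) - C

/-- `g_d(x) = x^{-d+1} f_d(x)`. -/
def gd (d : ℕ) : LaurentSeries ℚ := HahnSeries.single ((d : ℤ) - 1) 1 * fd d

/-- `h_d(x) = x^{-1} f_d(x)`. -/
def hd (d : ℕ) : LaurentSeries ℚ := HahnSeries.single (1 : ℤ) 1 * fd d

/-- `u_d(x) = (1 - x^{-1}) f_d(x)`. -/
def ud (d : ℕ) : LaurentSeries ℚ := (1 - HahnSeries.single (1 : ℤ) 1) * fd d

/-- The polynomial `1 + x + ⋯ + x^{d-1}`. -/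
def sumPow (d : ℕ) : ℚ[X] := ∑ i ∈ Finset.range d, X ^ i

/-- The real number `f_d(a) = ∏_{t=0}^∞ (1 - a^{-d^t})`. -/
def fdReal (a d : ℕ) : ℝ := ∏' t : ℕ, (1 - (a : ℝ) ^ (-(d ^ t : ℤ)))

/-- A real number `ξ` is badly approximable if there is `c > 0` with
`|ξ - P/Q| ≥ c/Q²` for all integers `P, Q` with `Q ≥ 1`. -/
def badApproxReal (ξ : ℝ) : Prop :=
  ∃ c : ℝ, 0 < c ∧ ∀ P Q : ℤ, 1 ≤ Q → c / (Q : ℝ) ^ 2 ≤ |ξ - (P : ℝ) / Q|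

/-!
The functional equation `f_d(x) = (1 - x⁻¹) f_d(x^d)` (compare coefficients digit by digit)
gives `g_d(x) = (x - 1) h_d(x^d)`. Since `x ↦ x^d` is a field endomorphism of `ℚ((x⁻¹))`
multiplying degrees by `d`, `g_d - (x - 1) p(x^d) / q(x^d) = (x - 1) · (h_d - p/q)(x^d)`
has degree `1 + d (-2‖q‖ - c)`. For coprimality, `x ↦ x^d` preserves coprimality of `p, q`,
and the irreducible `x - 1` divides `q(x^d)` iff `q(1^d) = q(1) = 0`.
-/

open HahnSeries

section

variable {d : ℕ}

def substPowAlgHom (hd₀ : 0 < d) : LaurentSeries ℚ →ₐ[ℚ] LaurentSeries ℚ :=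
  { embDomainRingHom (AddMonoidHom.mulLeft (d : ℤ)) (mul_right_injective₀ (by omega))
      fun _ _ => mul_le_mul_iff_of_pos_left (by omega) with
    commutes' := fun r => by
      rw [algebraMap_apply', PowerSeries.algebraMap_apply, Algebra.algebraMap_self,
        RingHom.id_apply, ofPowerSeries_C]
      exact embDomainRingHom_C }

theorem substPowAlgHom_apply (hd₀ : 0 < d) (u : LaurentSeries ℚ) :
    substPowAlgHom hd₀ u = substPow d u := by
  rw [substPow, dif_pos hd₀]
  rfl

theorem substPow_single (hd₀ : 0 < d) (a : ℤ) (r : ℚ) :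
    substPow d (single a r) = single (d * a) r := by
  rw [substPow, dif_pos hd₀]
  exact embDomain_single

theorem substPow_coeff_add_mul (hd₀ : 0 < d) (u : LaurentSeries ℚ) {r : ℕ} (hr : r < d)
    (m : ℤ) :
    (substPow d u).coeff (r + d * m) = if r = 0 then u.coeff m else 0 := by
  rw [substPow, dif_pos hd₀]
  split_ifs with hr0
  · subst hr0
    rw [Nat.cast_zero, zero_add]
    exact embDomain_coeff
  · apply embDomain_of_notMem_range
    rintro ⟨k, hk⟩
    change (d : ℤ) * k = r + d * m at hk
    have hdvd : (d : ℤ) ∣ r := ⟨k - m, by linarith⟩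
    have := Int.le_of_dvd (by omega) hdvd
    omega

theorem substPow_ne_zero (hd₀ : 0 < d) {u : LaurentSeries ℚ} (hu : u ≠ 0) :
    substPow d u ≠ 0 := by
  rw [← substPowAlgHom_apply hd₀]
  exact (_root_.map_ne_zero _).mpr hu

theorem order_substPow (hd₀ : 0 < d) (u : LaurentSeries ℚ) :
    (substPow d u).order = d * u.order := by
  rcases eq_or_ne u 0 with rfl | hu
  · simp [substPow]
  apply WithTop.coe_injective
  rw [order_eq_orderTop_of_ne_zero (substPow_ne_zero hd₀ hu), substPow, dif_pos hd₀,
    orderTop_embDomain, ← order_eq_orderTop_of_ne_zero hu]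
  rfl

theorem substPow_polyToLS (hd₀ : 0 < d) (r : ℚ[X]) :
    substPow d (polyToLS r) = polyToLS (r.comp (X ^ d)) := by
  have hx : substPowAlgHom hd₀ xL = xL ^ d := by
    rw [substPowAlgHom_apply, xL, substPow_single hd₀, single_pow, one_pow, nsmul_eq_mul,
      mul_neg_one]
  rw [← substPowAlgHom_apply hd₀, polyToLS, polyToLS, ← aeval_algHom_apply, aeval_comp, hx]
  simp


theorem tmCoeff_add_mul (hd₂ : 2 ≤ d) {r : ℕ} (hr : r < d) (m : ℕ) :
    tmCoeff d (r + d * m) = if r ≤ 1 then (-1) ^ r * tmCoeff d m else 0 := by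
  by_cases hrm : r = 0 ∧ m = 0
  · obtain ⟨rfl, rfl⟩ := hrm
    simp
  rw [tmCoeff, tmCoeff, Nat.digits_add d (by omega) r m hr (by tauto), List.all_cons, List.sum_cons,
    _root_.pow_add]
  by_cases hr1 : r ≤ 1 <;> simp [hr1, apply_ite]

theorem fd_coeff_natCast (n : ℕ) : (fd d).coeff n = tmCoeff d n := by
  simp [fd]

theorem fd_coeff_of_neg {n : ℤ} (hn : n < 0) : (fd d).coeff n = 0 := by
  rw [fd, ofPowerSeries_apply]
  apply embDomain_of_notMem_range
  rintro ⟨m, hm⟩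
  change (m : ℤ) = n at hm
  omega

theorem fd_coeff_add_mul (hd₂ : 2 ≤ d) {r : ℕ} (hr : r < d) (m : ℤ) :
    (fd d).coeff (r + d * m) = if r ≤ 1 then (-1) ^ r * (fd d).coeff m else 0 := by
  rcases lt_or_ge m 0 with hm | hm
  · have : (r : ℤ) + d * m < 0 := by nlinarith
    simp [fd_coeff_of_neg this, fd_coeff_of_neg hm]
  · lift m to ℕ using hm
    rw [show (r : ℤ) + d * m = (r + d * m : ℕ) by push_cast; ring, fd_coeff_natCast,
      fd_coeff_natCast, tmCoeff_add_mul hd₂ hr]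

theorem fd_eq_mul_substPow (hd₂ : 2 ≤ d) :
    fd d = (1 - single (1 : ℤ) 1) * substPow d (fd d) := by
  ext n
  -- compare coefficients at `n = r + d m`, `0 ≤ r < d`, by cases on `r = 0`, `r = 1`, `r ≥ 2`
  obtain ⟨r, m, hr, rfl⟩ : ∃ (r : ℕ) (m : ℤ), r < d ∧ n = r + d * m :=
    have hmod := Int.emod_nonneg n (b := d) (by omega)
    ⟨(n % d).toNat, n / d, by have := Int.emod_lt_of_pos n (b := d) (by omega); omega,
      by rw [Int.toNat_of_nonneg hmod]; linarith [Int.mul_ediv_add_emod n d]⟩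
  rw [sub_mul, one_mul, HahnSeries.coeff_sub, ← sub_add_cancel ((r : ℤ) + d * m) 1,
    coeff_single_mul_add, one_mul, sub_add_cancel, fd_coeff_add_mul hd₂ hr,
    substPow_coeff_add_mul (by omega) _ hr]
  rcases Nat.eq_zero_or_pos r with rfl | hr0
  · rw [show ((0 : ℕ) : ℤ) + d * m - 1 = (d - 1 : ℕ) + d * (m - 1) by
        push_cast [Nat.cast_sub (show 1 ≤ d by omega)]; ring,
      substPow_coeff_add_mul (by omega) _ (by omega)]
    simp [show d - 1 ≠ 0 by omega]
  · rw [show (r : ℤ) + d * m - 1 = (r - 1 : ℕ) + d * m by push_cast [hr0]; ring,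
      substPow_coeff_add_mul (by omega) _ (by omega)]
    rcases (show r = 1 ∨ 2 ≤ r by omega) with rfl | hr2
    · simp
    · simp [show ¬ r ≤ 1 by omega, show r ≠ 0 by omega, show r - 1 ≠ 0 by omega]


theorem gd_eq_mul_substPow_hd (hd₂ : 2 ≤ d) : gd d = (xL - 1) * substPow d (hd d) := by
  have hS : substPow d (hd d) = single (d : ℤ) 1 * substPow d (fd d) := by
    rw [hd, ← substPowAlgHom_apply (by omega), map_mul]
    simp only [substPowAlgHom_apply, substPow_single (show 0 < d by omega), mul_one]
  have hshift :
      single ((d : ℤ) - 1) (1 : ℚ) * (1 - single 1 1) = (xL - 1) * single (d : ℤ) 1 := by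
    rw [xL, mul_sub, sub_mul, mul_one, one_mul, single_mul_single, single_mul_single, mul_one,
      sub_add_cancel, neg_add_eq_sub]
  rw [gd, fd_eq_mul_substPow hd₂, hS, ← mul_assoc, hshift, mul_assoc]

theorem ldeg_mul {u v : LaurentSeries ℚ} (hu : u ≠ 0) (hv : v ≠ 0) :
    ldeg (u * v) = ldeg u + ldeg v := by
  rw [ldeg, ldeg, ldeg, order_mul hu hv, neg_add]

theorem ldeg_substPow (hd₀ : 0 < d) (u : LaurentSeries ℚ) :
    ldeg (substPow d u) = d * ldeg u := by
  rw [ldeg, ldeg, order_substPow hd₀, mul_neg]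

theorem orderTop_xL_sub_one : (xL - 1).orderTop = (-1 : ℤ) := by
  have hlt : xL.orderTop < (1 : LaurentSeries ℚ).orderTop := by
    rw [xL, orderTop_single one_ne_zero, ← single_zero_one, orderTop_single one_ne_zero]
    exact WithTop.coe_lt_coe.mpr (by norm_num)
  rw [orderTop_sub hlt, xL, orderTop_single one_ne_zero]

theorem xL_sub_one_ne_zero : xL - 1 ≠ 0 := by
  rw [← orderTop_ne_top, orderTop_xL_sub_one]
  exact WithTop.coe_ne_top

theorem ldeg_xL_sub_one : ldeg (xL - 1) = 1 := by
  have h := (order_eq_orderTop_of_ne_zero xL_sub_one_ne_zero).trans orderTop_xL_sub_one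
  rw [ldeg, WithTop.coe_injective h, neg_neg]

theorem gd_sub_div_comp_X_pow (hd₂ : 2 ≤ d) (p q : ℚ[X]) :
    gd d - polyToLS ((X - 1) * p.comp (X ^ d)) / polyToLS (q.comp (X ^ d))
      = (xL - 1) * substPow d (hd d - polyToLS p / polyToLS q) := by
  have hd₀ : 0 < d := by omega
  have hX : polyToLS ((X - 1) * p.comp (X ^ d)) = (xL - 1) * polyToLS (p.comp (X ^ d)) := by
    simp [polyToLS]
  rw [gd_eq_mul_substPow_hd hd₂, hX, ← substPow_polyToLS hd₀, ← substPow_polyToLS hd₀,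
    mul_div_assoc, ← mul_sub]
  simp only [← substPowAlgHom_apply hd₀, map_sub, map_div₀]

end

theorem IsCoprime.comp_X_pow {R : Type*} [CommRing R] {p q : R[X]} (h : IsCoprime p q) (d : ℕ) :
    IsCoprime (p.comp (X ^ d)) (q.comp (X ^ d)) :=
  h.map (compRingHom (X ^ d))

theorem X_sub_one_dvd_comp_X_pow_iff {R : Type*} [CommRing R] (q : R[X]) (d : ℕ) :
    X - 1 ∣ q.comp (X ^ d) ↔ X - 1 ∣ q := by
  rw [← C_1, dvd_iff_isRoot, dvd_iff_isRoot, IsRoot, IsRoot, eval_comp, eval_pow, eval_X, one_pow]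

theorem convergents_from_hd_general (d : ℕ) (hd2 : 2 ≤ d) (p q : ℚ[X])
    (hpq : IsCoprime p q) (c : ℤ) (hc : 0 < c)
    (h : ldeg (hd d - polyToLS p / polyToLS q) = -2 * (q.natDegree : ℤ) - c) :
    ldeg (gd d - polyToLS ((X - 1) * p.comp (X ^ d)) / polyToLS (q.comp (X ^ d)))
        = -2 * (d : ℤ) * (q.natDegree : ℤ) - ((d : ℤ) * c - 1) ∧
      (IsCoprime ((X - 1) * p.comp (X ^ d)) (q.comp (X ^ d)) ↔ ¬ (X - 1 ∣ q)) := by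
  -- `ldeg 0 = 0`, which `h` rules out because `c > 0`
  have hε : hd d - polyToLS p / polyToLS q ≠ 0 := by
    intro h0
    rw [h0, ldeg, order_zero] at h
    omega
  refine ⟨?_, ?_⟩
  · rw [gd_sub_div_comp_X_pow hd2, ldeg_mul xL_sub_one_ne_zero (substPow_ne_zero (by omega) hε),
      ldeg_xL_sub_one, ldeg_substPow (by omega), h]
    ring
  · have hirr : Irreducible (X - 1 : ℚ[X]) := by simpa using irreducible_X_sub_C (1 : ℚ)
    rw [IsCoprime.mul_left_iff, and_iff_left (hpq.comp_X_pow d), hirr.coprime_iff_not_dvd,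
      X_sub_one_dvd_comp_X_pow_iff]

/-- Lemma 1: convergents of `h_d` produce convergents of `g_d`. -/
theorem convergents_from_hd (d : ℕ) (hd2 : 2 ≤ d) (p q : ℚ[X])
    (hpq : IsCoprime p q) (hq : q ≠ 0) (c : ℤ) (hc : 0 < c)
    (h : ldeg (hd d - polyToLS p / polyToLS q) = -2 * (q.natDegree : ℤ) - c) :
    ldeg (gd d - polyToLS ((X - 1) * p.comp (X ^ d)) / polyToLS (q.comp (X ^ d)))
        = -2 * (d : ℤ) * (q.natDegree : ℤ) - ((d : ℤ) * c - 1) ∧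
      (IsCoprime ((X - 1) * p.comp (X ^ d)) (q.comp (X ^ d)) ↔ ¬ (X - 1 ∣ q)) :=
  convergents_from_hd_general d hd2 p q hpq c hc h
end
end

section
/- For every integer d ≥ 4, the Laurent series f_d is well approximable: for every integer C there exist polynomials p, q ∈ ℚ[x], q ≠ 0, with ‖f_d − p/q‖ < −2‖q‖ − C. In fact, for every k the partial product r_k(x) = ∏_{t=0}^{k}(1 − x^{−d^t}), written as a rational function with denominator x^{(d^{k+1}−1)/(d−1)}, satisfies ‖f_d − r_k‖ = −d^{k+1}. -/
open Polynomial

noncomputable section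

/-!
Write `y = x⁻¹`. For `m < d^K`, the coefficient of `y^(m + d^K q)` in `f_d` is that of `y^m`
times `1`, `-1` or `0` according as `q = 0`, `q = 1` or `2 ≤ q < d`. By induction on `K`,
`r = ∏_{t<K} (1 - y^{d^t})` therefore agrees with `f_d` below `y^{d^K}`. At `y^{d^K}` the
coefficient of `f_d` is `-1`, so `‖f_d - r‖ = -d^K`. As a polynomial in `y` of degree at most
`E = 1 + d + ⋯ + d^{K-1}`, `r` equals `p(x)/x^E`. Since `3E < d^K` when `d ≥ 4`, we get
`-d^K < -2E - C` once `K > C`.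
-/

open Finset

lemma tmCoeff_zero (d : ℕ) : tmCoeff d 0 = 1 := by simp [tmCoeff]

lemma tmCoeff_of_lt {d q : ℕ} (hq : q < d) :
    tmCoeff d q = if q ≤ 1 then (-1) ^ q else 0 := by
  rcases Nat.eq_zero_or_pos q with rfl | hq0
  · simp [tmCoeff_zero]
  · simp [tmCoeff, Nat.digits_of_lt d q hq0.ne' hq]

lemma tmCoeff_add_pow_mul {d j m : ℕ} (hd : 1 < d) (hm : m < d ^ j) (q : ℕ) :
    tmCoeff d (m + d ^ j * q) = tmCoeff d m * tmCoeff d q := by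
  rcases Nat.eq_zero_or_pos q with rfl | hq
  · simp [tmCoeff_zero]
  obtain ⟨k, rfl⟩ := Nat.exists_eq_add_of_le ((Nat.digits_length_le_iff hd m).2 hm)
  unfold tmCoeff
  rw [← Nat.digits_append_zeroes_append_digits hd hq]
  simp only [List.all_append, List.sum_append, List.sum_replicate, smul_zero, add_zero,
    Bool.and_eq_true, pow_add]
  by_cases h : (Nat.digits d m).all (· ≤ 1) = true <;> simp [h]

lemma tmCoeff_pow {d : ℕ} (hd : 1 < d) (K : ℕ) : tmCoeff d (d ^ K) = -1 := by
  simpa [tmCoeff_zero, tmCoeff_of_lt hd] using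
    tmCoeff_add_pow_mul hd (pow_pos (zero_lt_one.trans hd) K) 1

/-- The paper's `r_{K-1}`, in the variable `y = x⁻¹`. -/
def tmPartialProd (d K : ℕ) : ℚ[X] := ∏ t ∈ range K, (1 - X ^ d ^ t)

lemma coeff_tmPartialProd {d : ℕ} (hd : 1 < d) (K n : ℕ) :
    (tmPartialProd d K).coeff n = if n < d ^ K then tmCoeff d n else 0 := by
  induction K generalizing n with
  | zero => rcases n with _ | n <;> simp [tmPartialProd, tmCoeff_zero, coeff_one]
  | succ K ih =>
    have hN : 0 < d ^ K := by positivity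
    obtain ⟨m, q, hm, rfl⟩ : ∃ m q, m < d ^ K ∧ n = m + d ^ K * q :=
      ⟨n % d ^ K, n / d ^ K, Nat.mod_lt n hN, (Nat.mod_add_div n _).symm⟩
    rw [tmPartialProd, prod_range_succ, ← tmPartialProd, mul_sub, mul_one, coeff_sub,
      coeff_mul_X_pow', ih, ih, tmCoeff_add_pow_mul hd hm, pow_succ]
    match q with
    | 0 => simp [hm, tmCoeff_zero, show m < d ^ K * d by nlinarith]
    | 1 => simp [hm, tmCoeff_of_lt hd, show m + d ^ K < d ^ K * d by nlinarith]
    | q + 2 =>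
      have hq2 : d ^ K * (q + 2) = d ^ K * q + 2 * d ^ K := by ring
      rw [if_neg (by omega), if_pos (by omega), if_neg (by omega), sub_zero]
      split_ifs with h
      · have hq : q + 2 < d :=
          Nat.lt_of_mul_lt_mul_left (by nlinarith : d ^ K * (q + 2) < d ^ K * d)
        rw [tmCoeff_of_lt hq, if_neg (by omega), mul_zero]
      · rfl

lemma natDegree_tmPartialProd_le (d K : ℕ) :
    (tmPartialProd d K).natDegree ≤ ∑ t ∈ range K, d ^ t :=
  (natDegree_prod_le _ _).trans <| sum_le_sum fun _ _ => (natDegree_sub_le _ _).trans (by simp)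

section

open HahnSeries

lemma ofPowerSeries_coe_eq_aeval {R : Type*} [CommSemiring R] (p : R[X]) :
    ((p : PowerSeries R) : LaurentSeries R) = aeval (single 1 1) p := by
  change ((ofPowerSeries ℤ R).comp Polynomial.coeToPowerSeries.ringHom) p =
    (aeval (single (1 : ℤ) (1 : R))).toRingHom p
  congr 1
  refine Polynomial.ringHom_ext (fun a => ?_) ?_ <;> simp [algebraMap_apply']

lemma prod_one_sub_single_eq_coe (d K : ℕ) :
    ∏ t ∈ range K, ((1 : LaurentSeries ℚ) - single ((d ^ t : ℕ) : ℤ) 1) =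
      ((tmPartialProd d K : PowerSeries ℚ) : LaurentSeries ℚ) := by
  simp [ofPowerSeries_coe_eq_aeval, tmPartialProd, single_pow]

lemma order_coe_of_order_eq {R : Type*} [Semiring R] {φ : PowerSeries R} {N : ℕ}
    (h : φ.order = N) : (φ : LaurentSeries R).order = N := by
  obtain ⟨hN, hlt⟩ := PowerSeries.order_eq_nat.1 h
  have hcoeff : (φ : LaurentSeries R).coeff N ≠ 0 := by
    rwa [LaurentSeries.coeff_coe_powerSeries]
  refine le_antisymm (order_le_of_coeff_ne_zero hcoeff)
    ((le_order_iff_forall (ne_of_apply_ne (coeff · (N : ℤ)) (by simpa using hcoeff))).2 ?_)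
  intro j hj
  rw [PowerSeries.coeff_coe]
  split_ifs with hj0
  · rfl
  · exact hlt _ (by omega)

lemma order_fd_sub_tmPartialProd {d : ℕ} (hd : 1 < d) (K : ℕ) :
    (fd d - ((tmPartialProd d K : PowerSeries ℚ) : LaurentSeries ℚ)).order = d ^ K := by
  rw [fd, ← map_sub]
  refine order_coe_of_order_eq (PowerSeries.order_eq_nat.2 ⟨?_, fun i hi => ?_⟩)
  · simp [coeff_tmPartialProd hd, tmCoeff_pow hd]
  · simp [coeff_tmPartialProd hd, hi]

lemma ldeg_fd_sub_prod {d : ℕ} (hd : 1 < d) (K : ℕ) :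
    ldeg (fd d - ∏ t ∈ range K, ((1 : LaurentSeries ℚ) - single ((d ^ t : ℕ) : ℤ) 1)) =
      -((d : ℤ) ^ K) := by
  rw [ldeg, prod_one_sub_single_eq_coe, order_fd_sub_tmPartialProd hd]

lemma polyToLS_reflect_div {p : ℚ[X]} {E : ℕ} (hp : p.natDegree ≤ E) :
    polyToLS (reflect E p) / polyToLS (X ^ E) = ((p : PowerSeries ℚ) : LaurentSeries ℚ) := by
  let y : LaurentSeries ℚ := single 1 1
  have hxy : xL * y = 1 := by simp [xL, y, single_mul_single]
  let _ : Invertible y := ⟨xL, hxy, by rw [mul_comm, hxy]⟩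
  have hrefl := eval₂_reflect_mul_pow (algebraMap ℚ (LaurentSeries ℚ)) y E p hp
  rw [ofPowerSeries_coe_eq_aeval, aeval_def, ← hrefl, polyToLS, polyToLS, aeval_def, aeval_def,
    eval₂_X_pow, div_eq_mul_inv, ← inv_pow, inv_eq_of_mul_eq_one_right hxy]
  rfl

lemma exists_polyToLS_div_eq_prod {d : ℕ} (hd : 1 < d) (K : ℕ) :
    ∃ pnum : ℚ[X], polyToLS pnum / polyToLS (X ^ ((d ^ K - 1) / (d - 1))) =
      ∏ t ∈ range K, ((1 : LaurentSeries ℚ) - single ((d ^ t : ℕ) : ℤ) 1) := by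
  rw [← Nat.geomSum_eq hd, prod_one_sub_single_eq_coe]
  exact ⟨_, polyToLS_reflect_div (natDegree_tmPartialProd_le d K)⟩

end

lemma three_mul_geomSum_lt {d : ℕ} (hd : 4 ≤ d) (K : ℕ) : 3 * ∑ t ∈ range K, d ^ t < d ^ K := by
  induction K with
  | zero => simp
  | succ K ih =>
    rw [sum_range_succ, pow_succ]
    linarith [Nat.mul_le_mul_left (d ^ K) hd]

lemma le_geomSum {d : ℕ} (hd : 0 < d) (K : ℕ) : K ≤ ∑ t ∈ range K, d ^ t := by
  simpa using card_nsmul_le_sum (range K) (d ^ ·) 1 fun t _ => Nat.one_le_pow t d hd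

/-- Proposition 2: for `d ≥ 4` the Laurent series `f_d` is well approximable,
and the partial products `r_k` are rational functions with denominator
`x^{(d^{k+1}-1)/(d-1)}` approximating `f_d` with `‖f_d - r_k‖ = -d^{k+1}`. -/
theorem fd_wellApprox_of_ge_four (d : ℕ) (hd4 : 4 ≤ d) :
    wellApprox (fd d) ∧
    ∀ k : ℕ,
      (∃ pnum : ℚ[X],
          polyToLS pnum / polyToLS (X ^ ((d ^ (k + 1) - 1) / (d - 1)))
            = ∏ t ∈ Finset.range (k + 1),
                ((1 : LaurentSeries ℚ) - HahnSeries.single ((d ^ t : ℕ) : ℤ) 1)) ∧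
      ldeg (fd d - ∏ t ∈ Finset.range (k + 1),
              ((1 : LaurentSeries ℚ) - HahnSeries.single ((d ^ t : ℕ) : ℤ) 1))
          = -((d : ℤ) ^ (k + 1)) := by
  have hd : 1 < d := by omega
  have approx := fun k : ℕ =>
    And.intro (exists_polyToLS_div_eq_prod hd (k + 1)) (ldeg_fd_sub_prod hd (k + 1))
  refine ⟨fun C => ?_, approx⟩
  obtain ⟨⟨p, hp⟩, hdeg⟩ := approx C.toNat
  refine ⟨p, X ^ ((d ^ (C.toNat + 1) - 1) / (d - 1)), pow_ne_zero _ X_ne_zero, ?_⟩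
  rw [hp, hdeg, natDegree_X_pow, ← Nat.geomSum_eq hd]
  have h3 := three_mul_geomSum_lt hd4 (C.toNat + 1)
  have hK := le_geomSum (by omega : 0 < d) (C.toNat + 1)
  zify at h3 hK ⊢
  omega
end
end

section
/- Let d and a be integers with d ≥ 4 and a ≥ 2, and let f_d(a) denote the real number ∏_{t=0}^∞ (1 − a^{−d^t}). Then the irrationality exponent of f_d(a) is at least d − 1: for every real τ < d − 1 there exist infinitely many pairs of integers (P, Q) with Q ≥ 1 and 0 < |f_d(a) − P/Q| < Q^{−τ}. In particular, f_d(a) is not badly approximable. -/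
open Polynomial

noncomputable section

/-!
With `x = a⁻¹`, the partial products `∏_{t<N} (1 - x^{d^t})` are the rationals
`P_N / Q_N` with `Q_N = a^{1 + d + ⋯ + d^{N-1}}`. The exponents `d^t` are lacunary, so the tail
`∏_{t≥N} (1 - x^{d^t})` lies between `1 - 2x^{d^N}` and `1 - x^{d^N}`; hence
`0 < P_N / Q_N - f_d(a) ≤ 2a^{-d^N} ≤ Q_N^{-(d-1)}`, as `d^N = (d - 1)(1 + d + ⋯ + d^{N-1}) + 1`.
For `d ≥ 4` the exponent `d - 1` exceeds `2`, which rules out bad approximability.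
-/

open Finset Filter

theorem Finset.one_sub_sum_le_prod_one_sub {ι R : Type*} [CommRing R] [PartialOrder R]
    [IsOrderedRing R] (s : Finset ι) {f : ι → R} (hf0 : ∀ i, 0 ≤ f i) (hf1 : ∀ i, f i ≤ 1) :
    1 - ∑ i ∈ s, f i ≤ ∏ i ∈ s, (1 - f i) := by
  classical
  induction s using Finset.induction_on with
  | empty => simp
  | insert j s hj ih =>
    rw [sum_insert hj, prod_insert hj]
    have hj1 : 0 ≤ 1 - f j := sub_nonneg.2 (hf1 j)
    have hsum : 0 ≤ f j * ∑ i ∈ s, f i := mul_nonneg (hf0 j) (sum_nonneg fun i _ => hf0 i)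
    calc 1 - (f j + ∑ i ∈ s, f i) ≤ (1 - f j) * (1 - ∑ i ∈ s, f i) := by
          rw [show (1 - f j) * (1 - ∑ i ∈ s, f i)
            = 1 - (f j + ∑ i ∈ s, f i) + f j * ∑ i ∈ s, f i by ring]
          exact le_add_of_nonneg_right hsum
      _ ≤ (1 - f j) * ∏ i ∈ s, (1 - f i) := mul_le_mul_of_nonneg_left ih hj1

section OneSubProduct

variable {u : ℕ → ℝ}

theorem Real.multipliable_one_sub_of_summable (hu : Summable u) :
    Multipliable fun i => 1 - u i := by
  simpa [sub_eq_add_neg] using Real.multipliable_one_add_of_summable hu.neg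

theorem one_sub_tsum_le_tprod_one_sub (hu : Summable u) (hu0 : ∀ i, 0 ≤ u i)
    (hu1 : ∀ i, u i ≤ 1) : 1 - ∑' i, u i ≤ ∏' i, (1 - u i) := by
  refine ge_of_tendsto' (Real.multipliable_one_sub_of_summable hu).hasProd.tendsto_prod_nat
    fun n => ?_
  calc 1 - ∑' i, u i ≤ 1 - ∑ i ∈ range n, u i := by
        linarith [hu.sum_le_tsum (range n) fun i _ => hu0 i]
    _ ≤ ∏ i ∈ range n, (1 - u i) := (range n).one_sub_sum_le_prod_one_sub hu0 hu1

theorem tprod_one_sub_le_one_sub_zero (hu : Summable u) (hu0 : ∀ i, 0 ≤ u i)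
    (hu1 : ∀ i, u i ≤ 1) : ∏' i, (1 - u i) ≤ 1 - u 0 := by
  refine le_of_tendsto (Real.multipliable_one_sub_of_summable hu).hasProd.tendsto_prod_nat ?_
  filter_upwards [eventually_ge_atTop 1] with n hn
  obtain ⟨m, rfl⟩ := Nat.exists_eq_add_of_le' hn
  rw [prod_range_succ']
  exact mul_le_of_le_one_left (sub_nonneg.2 (hu1 0))
    (prod_le_one (fun i _ => sub_nonneg.2 (hu1 _)) fun i _ => sub_le_self _ (hu0 _))

end OneSubProduct

theorem Nat.pow_add_le_pow_add {d : ℕ} (hd : 2 ≤ d) (N i : ℕ) : d ^ N + i ≤ d ^ (i + N) := by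
  have hi : i + 1 ≤ d ^ i := Nat.lt_pow_self hd
  have hN : 1 ≤ d ^ N := Nat.one_le_pow _ _ (by omega)
  calc d ^ N + i ≤ (i + 1) * d ^ N := by nlinarith
    _ ≤ d ^ i * d ^ N := Nat.mul_le_mul_right _ hi
    _ = d ^ (i + N) := (pow_add d i N).symm

section LacunaryProduct

variable {x : ℝ} {d : ℕ}

theorem pow_pow_add_le (hx0 : 0 ≤ x) (hx : x ≤ 1 / 2) (hd : 2 ≤ d) (N i : ℕ) :
    x ^ d ^ (i + N) ≤ x ^ d ^ N * (1 / 2) ^ i :=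
  calc x ^ d ^ (i + N) ≤ x ^ (d ^ N + i) :=
        pow_le_pow_of_le_one hx0 (by linarith) (Nat.pow_add_le_pow_add hd N i)
    _ = x ^ d ^ N * x ^ i := pow_add x _ i
    _ ≤ x ^ d ^ N * (1 / 2) ^ i := by gcongr

theorem summable_pow_pow_add (hx0 : 0 ≤ x) (hx : x ≤ 1 / 2) (hd : 2 ≤ d) (N : ℕ) :
    Summable fun i => x ^ d ^ (i + N) :=
  ((summable_geometric_two).mul_left _).of_nonneg_of_le (fun _ => by positivity)
    (pow_pow_add_le hx0 hx hd N)

theorem tsum_pow_pow_add_le (hx0 : 0 ≤ x) (hx : x ≤ 1 / 2) (hd : 2 ≤ d) (N : ℕ) :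
    ∑' i, x ^ d ^ (i + N) ≤ 2 * x ^ d ^ N :=
  calc ∑' i, x ^ d ^ (i + N) ≤ ∑' i, x ^ d ^ N * (1 / 2) ^ i :=
        (summable_pow_pow_add hx0 hx hd N).tsum_le_tsum (pow_pow_add_le hx0 hx hd N)
          ((summable_geometric_two).mul_left _)
    _ = 2 * x ^ d ^ N := by rw [tsum_mul_left, tsum_geometric_two, mul_comm]

theorem prod_sub_tprod_one_sub_pow_pow (hx0 : 0 < x) (hx : x ≤ 1 / 2) (hd : 2 ≤ d) (N : ℕ) :
    0 < ∏ t ∈ range N, (1 - x ^ d ^ t) - ∏' t, (1 - x ^ d ^ t) ∧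
      ∏ t ∈ range N, (1 - x ^ d ^ t) - ∏' t, (1 - x ^ d ^ t) ≤ 2 * x ^ d ^ N := by
  have hu0 : ∀ t, 0 ≤ x ^ d ^ t := fun t => by positivity
  have hu1 : ∀ t, x ^ d ^ t ≤ 1 / 2 := fun t =>
    (pow_le_of_le_one hx0.le (by linarith) (pow_ne_zero t (by omega))).trans hx
  have hu1' : ∀ t, x ^ d ^ t ≤ 1 := fun t => (hu1 t).trans (by norm_num)
  set head := ∏ t ∈ range N, (1 - x ^ d ^ t)
  set tail := ∏' i, (1 - x ^ d ^ (i + N))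
  have hsplit : ∏' t, (1 - x ^ d ^ t) = head * tail :=
    (Multipliable.prod_mul_tprod_nat_mul' (f := fun t => 1 - x ^ d ^ t)
      (Real.multipliable_one_sub_of_summable (summable_pow_pow_add hx0.le hx hd N))).symm
  have htail_le : tail ≤ 1 - x ^ d ^ N := by
    simpa using tprod_one_sub_le_one_sub_zero (summable_pow_pow_add hx0.le hx hd N)
      (fun i => hu0 _) fun i => hu1' _
  have htail_ge : 1 - 2 * x ^ d ^ N ≤ tail :=
    (sub_le_sub_left (tsum_pow_pow_add_le hx0.le hx hd N) 1).trans
      (one_sub_tsum_le_tprod_one_sub (summable_pow_pow_add hx0.le hx hd N)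
        (fun i => hu0 _) fun i => hu1' _)
  have hhead_pos : 0 < head := prod_pos fun t _ => by linarith [hu1 t]
  have hhead_le : head ≤ 1 := prod_le_one (fun t _ => by linarith [hu1 t])
    fun t _ => sub_le_self _ (hu0 t)
  have hxN : 0 < x ^ d ^ N := by positivity
  rw [hsplit, ← mul_one_sub]
  exact ⟨mul_pos hhead_pos (by linarith),
    (mul_le_of_le_one_left (by linarith) hhead_le).trans (by linarith)⟩

end LacunaryProduct

theorem StrictMono.tendsto_atTop_int {Q : ℕ → ℤ} (hQ : StrictMono Q) : Tendsto Q atTop atTop := by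
  have hlin : ∀ n : ℕ, Q 0 + n ≤ Q n := by
    intro n
    induction n with
    | zero => simp
    | succ n ih => push_cast; linarith [hQ n.lt_succ_self]
  exact tendsto_atTop_mono hlin (tendsto_atTop_add_const_left _ _ tendsto_natCast_atTop_atTop)

section ApproximationSequence

variable {ξ κ : ℝ} {P Q : ℕ → ℤ}

theorem infinite_setOf_abs_sub_div_lt_rpow (hQ : StrictMono Q) (hQ0 : 1 < Q 0)
    (hpos : ∀ N, 0 < |ξ - P N / Q N|) (hle : ∀ N, |ξ - P N / Q N| ≤ (Q N : ℝ) ^ (-κ))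
    {τ : ℝ} (hτ : τ < κ) :
    {PQ : ℤ × ℤ | 1 ≤ PQ.2 ∧ 0 < |ξ - (PQ.1 : ℝ) / (PQ.2 : ℝ)| ∧
      |ξ - (PQ.1 : ℝ) / (PQ.2 : ℝ)| < (PQ.2 : ℝ) ^ (-τ)}.Infinite := by
  refine Set.infinite_of_injective_forall_mem (f := fun N => (P N, Q N))
    (fun m n h => hQ.injective (congrArg Prod.snd h)) fun N => ?_
  have hQN : 1 < Q N := hQ0.trans_le (hQ.monotone N.zero_le)
  refine ⟨hQN.le, hpos N, (hle N).trans_lt ?_⟩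
  exact Real.rpow_lt_rpow_of_exponent_lt (by exact_mod_cast hQN) (neg_lt_neg hτ)

theorem not_badApproxReal_of_abs_sub_div_le_rpow (hQ : StrictMono Q) (hκ : 2 < κ)
    (hle : ∀ N, |ξ - P N / Q N| ≤ (Q N : ℝ) ^ (-κ)) : ¬ badApproxReal ξ := by
  rintro ⟨c, hc, hbad⟩
  have hQr : Tendsto (fun N => (Q N : ℝ)) atTop atTop :=
    tendsto_intCast_atTop_iff.2 hQ.tendsto_atTop_int
  obtain ⟨N, hN1, hNc⟩ := ((hQr.eventually_ge_atTop 1).and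
    (((tendsto_rpow_neg_atTop (sub_pos.2 hκ)).comp hQr).eventually (gt_mem_nhds hc))).exists
  have hQN : (0 : ℝ) < Q N := by linarith
  have hsplit : (Q N : ℝ) ^ (-κ) = (Q N : ℝ) ^ (-(κ - 2)) / (Q N : ℝ) ^ 2 := by
    rw [div_eq_mul_inv, ← Real.rpow_natCast, ← Real.rpow_neg hQN.le, ← Real.rpow_add hQN]
    ring_nf
  have := (hbad (P N) (Q N) (by exact_mod_cast hN1)).trans (hle N)
  rw [hsplit] at this
  exact (div_lt_div_of_pos_right hNc (by positivity)).not_ge this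

end ApproximationSequence

def fdConvNum (a d N : ℕ) : ℤ := ∏ t ∈ range N, ((a : ℤ) ^ d ^ t - 1)

def fdConvDen (a d N : ℕ) : ℤ := (a : ℤ) ^ ∑ t ∈ range N, d ^ t

section Convergents

variable {a d : ℕ}

theorem fdReal_eq_tprod (a d : ℕ) : fdReal a d = ∏' t, (1 - (a : ℝ)⁻¹ ^ d ^ t) := by
  unfold fdReal
  congr 1 with t
  rw [show ((d : ℤ) ^ t) = ((d ^ t : ℕ) : ℤ) by push_cast; rfl, zpow_neg, zpow_natCast, inv_pow]

theorem fdConvNum_div_fdConvDen (ha : a ≠ 0) (N : ℕ) :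
    (fdConvNum a d N : ℝ) / fdConvDen a d N = ∏ t ∈ range N, (1 - (a : ℝ)⁻¹ ^ d ^ t) := by
  rw [fdConvNum, fdConvDen, ← prod_pow_eq_pow_sum]
  push_cast
  rw [← prod_div_distrib]
  refine prod_congr rfl fun t _ => ?_
  rw [sub_div, div_self (by positivity), inv_pow, one_div]

theorem pow_pow_eq_mul_fdConvDen_pow (hd : 1 ≤ d) (N : ℕ) :
    (a : ℝ) ^ d ^ N = a * (fdConvDen a d N : ℝ) ^ (d - 1) := by
  obtain ⟨e, rfl⟩ := Nat.exists_eq_add_of_le' hd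
  rw [← geom_sum_mul_add e N, fdConvDen]
  push_cast
  rw [pow_add, pow_one, pow_mul, mul_comm]

theorem abs_fdReal_sub_fdConv (ha : 2 ≤ a) (hd : 2 ≤ d) (N : ℕ) :
    0 < |fdReal a d - fdConvNum a d N / fdConvDen a d N| ∧
      |fdReal a d - fdConvNum a d N / fdConvDen a d N| ≤
        (fdConvDen a d N : ℝ) ^ (-((d : ℝ) - 1)) := by
  have ha' : (2 : ℝ) ≤ a := by exact_mod_cast ha
  have hx : (a : ℝ)⁻¹ ≤ 1 / 2 := by rw [one_div]; exact inv_anti₀ two_pos ha'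
  obtain ⟨hpos, hle⟩ := prod_sub_tprod_one_sub_pow_pow (inv_pos.2 (by linarith)) hx hd N
  rw [fdReal_eq_tprod, fdConvNum_div_fdConvDen (by omega), abs_sub_comm, abs_of_pos hpos]
  refine ⟨hpos, hle.trans ?_⟩
  have hQ : (0 : ℝ) < fdConvDen a d N := by unfold fdConvDen; push_cast; positivity
  rw [inv_pow, pow_pow_eq_mul_fdConvDen_pow (by omega), show (d : ℝ) - 1 = ((d - 1 : ℕ) : ℝ) by
    push_cast [show 1 ≤ d by omega]; rfl, Real.rpow_neg hQ.le, Real.rpow_natCast, mul_inv,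
    ← mul_assoc]
  exact mul_le_of_le_one_left (by positivity)
    (by rw [← div_eq_mul_inv, div_le_one (by linarith)]; exact ha')

theorem fdConvDen_strictMono (ha : 2 ≤ a) (hd : 1 ≤ d) : StrictMono (fdConvDen a d) :=
  strictMono_nat_of_lt_succ fun N => by
    unfold fdConvDen
    rw [sum_range_succ]
    exact pow_lt_pow_right₀ (by exact_mod_cast ha) (by simpa using Nat.pow_pos (n := N) hd)

end Convergents

/-- Proposition 3: for `d ≥ 4` and `a ≥ 2`, the irrationality exponent of
`f_d(a)` is at least `d - 1`; in particular `f_d(a)` is not badly approximable. -/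
theorem fdReal_irrationality_exponent (a d : ℕ) (ha : 2 ≤ a) (hd4 : 4 ≤ d) :
    (∀ τ : ℝ, τ < (d : ℝ) - 1 →
      {PQ : ℤ × ℤ | 1 ≤ PQ.2 ∧ 0 < |fdReal a d - (PQ.1 : ℝ) / (PQ.2 : ℝ)| ∧
        |fdReal a d - (PQ.1 : ℝ) / (PQ.2 : ℝ)| < (PQ.2 : ℝ) ^ (-τ)}.Infinite) ∧
    ¬ badApproxReal (fdReal a d) := by
  have hd : 2 ≤ d := by omega
  have hQ : StrictMono fun N => fdConvDen a d (N + 1) :=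
    (fdConvDen_strictMono ha (by omega)).comp (strictMono_id.add_const 1)
  have happrox := fun N => abs_fdReal_sub_fdConv ha hd (N + 1)
  have hQ0 : 1 < fdConvDen a d (0 + 1) := by simp [fdConvDen]; omega
  have hκ : 2 < (d : ℝ) - 1 := by
    have : (4 : ℝ) ≤ d := by exact_mod_cast hd4
    linarith
  exact ⟨fun τ hτ => infinite_setOf_abs_sub_div_lt_rpow hQ hQ0 (fun N => (happrox N).1)
      (fun N => (happrox N).2) hτ,
    not_badApproxReal_of_abs_sub_div_le_rpow hQ hκ fun N => (happrox N).2⟩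
end
end
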